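/- Let Ψ be an Orlicz function satisfying condition Δ², and let φ : 𝕋 → ℂ be measurable with |φ(w)| ≤ 1 for all w ∈ 𝕋. If condition (W) holds, then for every A > 0 one has m({w ∈ 𝕋 : 1−|φ(w)| < λ}) = O( 1/Ψ(A·Ψ⁻¹(1/λ)) ) as λ → 0⁺; that is, there exist K > 0 and λ₀ ∈ (0,1) such that m({w ∈ 𝕋 : 1−|φ(w)| < λ}) ≤ K/Ψ(A·Ψ⁻¹(1/λ)) for all 0 < λ < λ₀. -/

import Mathlib

open MeasureTheory

/-- The Luxemburg norm of a complex-valued function with respect to an Orlicz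
function `Ψ` and a measure `μ`, with the convention `inf ∅ = ∞`. -/
noncomputable def luxNorm {α : Type*} [MeasurableSpace α] (Ψ : ℝ → ℝ)
    (μ : Measure α) (f : α → ℂ) : ENNReal :=
  sInf {C : ENNReal | ∃ c : ℝ, 0 < c ∧ C = ENNReal.ofReal c ∧
    (∫⁻ a, ENNReal.ofReal (Ψ (‖f a‖ / c)) ∂μ) ≤ 1}

/-- The normalized Lebesgue (Haar) measure on the unit circle `𝕋 ⊆ ℂ`,
realized as a measure on `ℂ` carried by the circle. -/
noncomputable def circleMeasure : Measure ℂ :=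
  (ENNReal.ofReal (2 * Real.pi))⁻¹ •
    (Measure.map (fun t : ℝ => Complex.exp (t * Complex.I))
      (volume.restrict (Set.Ioc 0 (2 * Real.pi))))

/-- The function `u_{a,r}(z) = ((1-r)/(1 - conj(a)·r·z))²`. -/
noncomputable def uar (a : ℂ) (r : ℝ) (z : ℂ) : ℂ :=
  (((1 : ℂ) - (r : ℂ)) / (1 - (starRingEnd ℂ) a * (r : ℂ) * z)) ^ 2

/-! Let `t = Ψ⁻¹(1/λ)` and `B = max A 1`. If `1 - |φ(w)| < λ`, then `(1-λ)φ(w)` lies within `3λ`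
of one of the `⌈2π/λ⌉ ≤ 8/λ` points `a_j = exp(ijλ)`, and there `|u_{a_j,1-λ}(φ(w))| ≥ 1/9`.
Condition (W) makes `t · ‖u_{a,1-λ}∘φ‖_Ψ < 1/(9αB)` uniformly in `a` for small `λ`, so by
Chebyshev each set `{|u_{a_j,1-λ}∘φ| ≥ 1/9}` has measure at most `1/Ψ(αBt)`, and by Δ²
`Ψ(αBt) ≥ Ψ(Bt)² ≥ Ψ(t) Ψ(At) = Ψ(At)/λ`. Summing over the `8/λ` points gives `8/Ψ(At)`. -/

open Complex Filter Set Topology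
open scoped Real

theorem norm_exp_mul_I_sub_exp_mul_I_le (s t : ℝ) :
    ‖exp (s * I) - exp (t * I)‖ ≤ |s - t| := by
  have h : exp (s * I) - exp (t * I) = exp (t * I) * (exp (I * (s - t : ℝ)) - 1) := by
    rw [mul_sub, ← exp_add]; push_cast; ring_nf
  rw [h, norm_mul, norm_exp_ofReal_mul_I, one_mul, ← Real.norm_eq_abs]
  exact Real.norm_exp_I_mul_ofReal_sub_one_le

theorem exists_lt_natCeil_norm_exp_mul_I_sub_le (θ : ℝ) {ε : ℝ} (hε : 0 < ε) :
    ∃ j < ⌈2 * π / ε⌉₊, ‖exp (θ * I) - exp ((j * ε : ℝ) * I)‖ ≤ ε := by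
  set θ' := toIcoMod Real.two_pi_pos 0 θ
  obtain ⟨hθ'0, hθ'2π⟩ : θ' ∈ Ico 0 (2 * π) := by
    simpa using toIcoMod_mem_Ico Real.two_pi_pos 0 θ
  have hexp : exp (θ' * I) = exp (θ * I) := by
    have hθθ' := toIcoMod_sub_self_eq_mul Real.two_pi_pos 0 θ
    rw [show θ' = θ - toIcoDiv Real.two_pi_pos 0 θ * (2 * π) by linarith]
    push_cast
    exact exp_mul_I_periodic.sub_int_mul_eq _
  have hfloor := Nat.floor_le (div_nonneg hθ'0 hε.le)
  have hfloor' := Nat.lt_floor_add_one (θ' / ε)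
  refine ⟨⌊θ' / ε⌋₊, ?_, ?_⟩
  · rw [Nat.lt_ceil]
    exact hfloor.trans_lt (div_lt_div_of_pos_right hθ'2π hε)
  · rw [← hexp]
    refine (norm_exp_mul_I_sub_exp_mul_I_le _ _).trans (abs_le.2 ⟨?_, ?_⟩)
    · nlinarith [(le_div_iff₀ hε).1 hfloor]
    · nlinarith [(div_lt_iff₀ hε).1 hfloor']

theorem natCeil_two_pi_div_le {ε : ℝ} (hε : 0 < ε) (hε1 : ε ≤ 1) :
    (⌈2 * π / ε⌉₊ : ℝ) ≤ 8 / ε := by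
  calc (⌈2 * π / ε⌉₊ : ℝ) ≤ 2 * π / ε + 1 := (Nat.ceil_lt_add_one (by positivity)).le
    _ = (2 * π + ε) / ε := by field_simp
    _ ≤ 8 / ε := by gcongr; linarith [Real.pi_lt_d2]

theorem ae_circleMeasure_norm_eq_one : ∀ᵐ w ∂circleMeasure, ‖w‖ = 1 := by
  have hmeas : Measurable fun t : ℝ => exp (t * I) := by fun_prop
  have hset : MeasurableSet {w : ℂ | ‖w‖ = 1} :=
    (isClosed_eq continuous_norm continuous_const).measurableSet
  refine Measure.ae_smul_measure ((ae_map_iff hmeas.aemeasurable hset).2 ?_) _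
  exact Eventually.of_forall fun t => norm_exp_ofReal_mul_I t

theorem measure_le_norm_le_inv_of_luxNorm_lt {α : Type*} [MeasurableSpace α] {μ : Measure α}
    {Ψ : ℝ → ℝ} (hΨ : MonotoneOn Ψ (Ici 0)) {f : α → ℂ} (hf : Measurable f) {c s : ℝ}
    (hs : 0 ≤ s) (hlux : luxNorm Ψ μ f < ENNReal.ofReal c) :
    μ {x | s ≤ ‖f x‖} ≤ (ENNReal.ofReal (Ψ (s / c)))⁻¹ := by
  obtain ⟨_, ⟨c', hc', rfl, hint⟩, hlt⟩ := sInf_lt_iff.mp hlux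
  have hcc' : c' < c := (ENNReal.ofReal_lt_ofReal_iff'.mp hlt).1
  have hS : MeasurableSet {x | s ≤ ‖f x‖} := measurableSet_le measurable_const hf.norm
  have hpoint : {x | s ≤ ‖f x‖}.indicator (fun _ => ENNReal.ofReal (Ψ (s / c)))
      ≤ fun x => ENNReal.ofReal (Ψ (‖f x‖ / c')) := by
    refine Set.indicator_le fun x hx => ENNReal.ofReal_le_ofReal ?_
    refine hΨ (mem_Ici.2 (div_nonneg hs (hc'.trans hcc').le)) (mem_Ici.2 (by positivity)) ?_
    calc s / c ≤ s / c' := div_le_div_of_nonneg_left hs hc' hcc'.le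
      _ ≤ ‖f x‖ / c' := div_le_div_of_nonneg_right hx hc'.le
  rw [ENNReal.le_inv_iff_mul_le, mul_comm, ← lintegral_indicator_const hS]
  exact (lintegral_mono hpoint).trans hint

theorem measurable_uar (a : ℂ) (r : ℝ) : Measurable (uar a r) := by
  unfold uar; fun_prop

theorem norm_one_sub_conj_mul {a : ℂ} (ha : ‖a‖ = 1) (z : ℂ) :
    ‖1 - starRingEnd ℂ a * z‖ = ‖a - z‖ := by
  have hconj : starRingEnd ℂ a * a = 1 := by
    rw [mul_comm, mul_conj, normSq_eq_norm_sq, ha]; norm_num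
  rw [← one_mul ‖a - z‖, ← ha, ← norm_conj a, ← norm_mul, mul_sub, hconj]

theorem inv_nine_le_norm_uar {a z : ℂ} {r : ℝ} (ha : ‖a‖ = 1) (hr0 : 0 ≤ r) (hr1 : r < 1)
    (hz : ‖z‖ ≤ 1) (h : ‖a - r * z‖ ≤ 3 * (1 - r)) : 1 / 9 ≤ ‖uar a r z‖ := by
  have hrz : ‖(r : ℂ) * z‖ < ‖a‖ := by
    rw [norm_mul, norm_real, Real.norm_of_nonneg hr0, ha]; nlinarith [norm_nonneg z]
  have hpos : 0 < ‖a - r * z‖ := by linarith [norm_sub_norm_le a (r * z)]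
  have hnum : ‖(1 : ℂ) - r‖ = 1 - r := by
    rw [← ofReal_one, ← ofReal_sub, norm_real, Real.norm_of_nonneg (by linarith)]
  rw [uar, norm_pow, norm_div, hnum, mul_assoc, norm_one_sub_conj_mul ha]
  calc (1 : ℝ) / 9 = (1 / 3) ^ 2 := by norm_num
    _ ≤ ((1 - r) / ‖a - r * z‖) ^ 2 := by
      refine pow_le_pow_left₀ (by norm_num) ?_ 2
      rw [le_div_iff₀ hpos]; linarith

theorem exists_inv_nine_le_norm_uar {z : ℂ} {ε : ℝ} (hz : ‖z‖ ≤ 1) (hzε : 1 - ‖z‖ < ε)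
    (hε0 : 0 < ε) (hε1 : ε < 1) :
    ∃ j < ⌈2 * π / ε⌉₊, 1 / 9 ≤ ‖uar (exp ((j * ε : ℝ) * I)) (1 - ε) z‖ := by
  obtain ⟨j, hj, hnet⟩ := exists_lt_natCeil_norm_exp_mul_I_sub_le (arg z) hε0
  refine ⟨j, hj, inv_nine_le_norm_uar (norm_exp_ofReal_mul_I _) (by linarith) (by linarith) hz ?_⟩
  set b := exp (arg z * I)
  have hradial : ‖b - ((1 - ε : ℝ) : ℂ) * z‖ = 1 - (1 - ε) * ‖z‖ := by
    conv_lhs => rw [← norm_mul_exp_arg_mul_I z]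
    rw [← mul_assoc, ← one_sub_mul, norm_mul, norm_exp_ofReal_mul_I, mul_one, ← ofReal_mul,
      ← ofReal_one, ← ofReal_sub, norm_real, Real.norm_of_nonneg (by nlinarith [norm_nonneg z])]
  calc ‖exp ((j * ε : ℝ) * I) - ((1 - ε : ℝ) : ℂ) * z‖
      ≤ ‖exp ((j * ε : ℝ) * I) - b‖ + ‖b - ((1 - ε : ℝ) : ℂ) * z‖ :=
        norm_sub_le_norm_sub_add_norm_sub _ _ _
    _ ≤ 3 * (1 - (1 - ε)) := by
      rw [norm_sub_rev, hradial]; nlinarith [norm_nonneg z, hnet]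

theorem circleMeasure_one_sub_norm_lt_le {Ψ : ℝ → ℝ} (hΨ : MonotoneOn Ψ (Ici 0))
    {φ : ℂ → ℂ} (hφ : Measurable φ) (hφbd : ∀ w : ℂ, ‖w‖ = 1 → ‖φ w‖ ≤ 1)
    {ε β t : ℝ} (hε0 : 0 < ε) (hε1 : ε < 1) (hβ : 0 < β) (ht : 0 < t)
    (hlux : ∀ a : ℂ, ‖a‖ = 1 → ENNReal.ofReal t *
      luxNorm Ψ circleMeasure (fun w => uar a (1 - ε) (φ w)) < ENNReal.ofReal (1 / (9 * β))) :
    circleMeasure {w | 1 - ‖φ w‖ < ε}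
      ≤ ENNReal.ofReal (8 / ε) / ENNReal.ofReal (Ψ (β * t)) := by
  set N := ⌈2 * π / ε⌉₊
  set E : ℕ → Set ℂ := fun j => {w | 1 / 9 ≤ ‖uar (exp ((j * ε : ℝ) * I)) (1 - ε) (φ w)‖}
  have hcover : {w | 1 - ‖φ w‖ < ε} ≤ᵐ[circleMeasure] ⋃ j ∈ Finset.range N, E j := by
    filter_upwards [ae_circleMeasure_norm_eq_one] with w hw hwε
    obtain ⟨j, hj, hE⟩ := exists_inv_nine_le_norm_uar (hφbd w hw) hwε hε0 hε1
    exact mem_biUnion (Finset.mem_range.2 hj) hE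
  have hE : ∀ j, circleMeasure (E j) ≤ (ENNReal.ofReal (Ψ (β * t)))⁻¹ := fun j => by
    have hlux' := hlux _ (norm_exp_ofReal_mul_I ((j * ε : ℝ)))
    rw [mul_comm, ← ENNReal.lt_div_iff_mul_lt (Or.inl (by simpa using ht))
      (Or.inl ENNReal.ofReal_ne_top), ← ENNReal.ofReal_div_of_pos ht] at hlux'
    have hcheb := measure_le_norm_le_inv_of_luxNorm_lt (s := 1 / 9) hΨ
      ((measurable_uar _ _).comp hφ) (by norm_num) hlux'
    rwa [show 1 / 9 / (1 / (9 * β) / t) = β * t by field_simp] at hcheb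
  calc circleMeasure {w | 1 - ‖φ w‖ < ε}
      ≤ circleMeasure (⋃ j ∈ Finset.range N, E j) := measure_mono_ae hcover
    _ ≤ ∑ j ∈ Finset.range N, circleMeasure (E j) := measure_biUnion_finset_le _ _
    _ ≤ N * (ENNReal.ofReal (Ψ (β * t)))⁻¹ := by
      simpa [N] using Finset.sum_le_sum fun j (_ : j ∈ Finset.range N) => hE j
    _ ≤ ENNReal.ofReal (8 / ε) / ENNReal.ofReal (Ψ (β * t)) := by
      rw [div_eq_mul_inv, ← ENNReal.ofReal_natCast]
      exact mul_le_mul_left (ENNReal.ofReal_le_ofReal (natCeil_two_pi_div_le hε0 hε1.le)) _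

theorem eventually_ofReal_mul_luxNorm_uar_lt {Ψ Ψinv : ℝ → ℝ} {φ : ℂ → ℂ}
    (hW : Tendsto (fun r : ℝ => ENNReal.ofReal (Ψinv (1 / (1 - r))) *
        ⨆ a : {a : ℂ // ‖a‖ = 1}, luxNorm Ψ circleMeasure (fun w => uar (a : ℂ) r (φ w)))
      (𝓝[<] 1) (𝓝 0)) {δ : ℝ} (hδ : 0 < δ) :
    ∀ᶠ ε in 𝓝[>] 0, ∀ a : ℂ, ‖a‖ = 1 →
      ENNReal.ofReal (Ψinv (1 / ε)) * luxNorm Ψ circleMeasure (fun w => uar a (1 - ε) (φ w))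
        < ENNReal.ofReal δ := by
  have hreflect : Tendsto (fun ε : ℝ => 1 - ε) (𝓝[>] 0) (𝓝[<] 1) := by
    refine tendsto_nhdsWithin_iff.2 ⟨?_, eventually_nhdsWithin_of_forall fun ε hε => ?_⟩
    · simpa using ((continuous_sub_left (1 : ℝ)).tendsto 0).mono_left nhdsWithin_le_nhds
    · simpa using hε
  filter_upwards [hreflect.eventually (hW.eventually_lt_const (ENNReal.ofReal_pos.2 hδ))]
    with ε hε a ha
  rw [sub_sub_cancel] at hε
  refine lt_of_le_of_lt ?_ hε
  gcongr
  exact le_iSup_of_le (⟨a, ha⟩ : {a : ℂ // ‖a‖ = 1}) le_rfl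

theorem exists_forall_lt_of_eventually_nhdsGT_zero {p : ℝ → Prop} (h : ∀ᶠ x in 𝓝[>] 0, p x) :
    ∃ x₀ : ℝ, 0 < x₀ ∧ x₀ < 1 ∧ ∀ x, 0 < x → x < x₀ → p x := by
  obtain ⟨u, hu, hsub⟩ := mem_nhdsGT_iff_exists_Ioo_subset.1 h
  refine ⟨min u (1 / 2), lt_min hu (by norm_num), (min_le_right _ _).trans_lt (by norm_num),
    fun x hx hxu => hsub ⟨hx, hxu.trans_le (min_le_left _ _)⟩⟩

theorem apply_mul_apply_le_of_sq_le {Ψ : ℝ → ℝ} (hΨ : MonotoneOn Ψ (Ici 0)) (hΨ0 : Ψ 0 = 0)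
    {α x₀ : ℝ} (hΔ : ∀ x ≥ x₀, Ψ x ^ 2 ≤ Ψ (α * x)) {A t : ℝ} (hA : 0 ≤ A) (ht0 : 0 ≤ t)
    (ht : x₀ ≤ t) : Ψ t * Ψ (A * t) ≤ Ψ (α * max A 1 * t) := by
  have hnonneg : ∀ x, 0 ≤ x → 0 ≤ Ψ x := fun x hx =>
    hΨ0 ▸ hΨ self_mem_Ici (mem_Ici.2 hx) hx
  have hBt : t ≤ max A 1 * t := le_mul_of_one_le_left ht0 (le_max_right _ _)
  have hAt : A * t ≤ max A 1 * t := mul_le_mul_of_nonneg_right (le_max_left _ _) ht0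
  calc Ψ t * Ψ (A * t) ≤ Ψ (max A 1 * t) ^ 2 := by
        rw [sq]
        exact mul_le_mul (hΨ (mem_Ici.2 ht0) (mem_Ici.2 (ht0.trans hBt)) hBt)
          (hΨ (mem_Ici.2 (by positivity)) (mem_Ici.2 (ht0.trans hBt)) hAt)
          (hnonneg _ (by positivity)) (hnonneg _ (ht0.trans hBt))
    _ ≤ Ψ (α * max A 1 * t) := mul_assoc α _ t ▸ hΔ _ (ht.trans hBt)

theorem stmt_5_general
    (Ψ Ψinv : ℝ → ℝ)
    (hΨ0 : Ψ 0 = 0)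
    (hΨmono : StrictMonoOn Ψ (Set.Ici 0))
    (hΨinv2 : ∀ y, 0 ≤ y → Ψ (Ψinv y) = y)
    (hΨinv0 : ∀ y, 0 ≤ y → 0 ≤ Ψinv y)
    -- condition Δ²
    (hΔ2 : ∃ α > (1 : ℝ), ∃ x₀ > (0 : ℝ), ∀ x ≥ x₀, (Ψ x) ^ 2 ≤ Ψ (α * x))
    (φ : ℂ → ℂ) (hφmeas : Measurable φ)
    (hφbd : ∀ w : ℂ, ‖w‖ = 1 → ‖φ w‖ ≤ 1)
    -- condition (W)
    (hW : Filter.Tendsto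
      (fun r : ℝ => ENNReal.ofReal (Ψinv (1 / (1 - r))) *
        ⨆ a : {a : ℂ // ‖a‖ = 1},
          luxNorm Ψ circleMeasure (fun w => uar (a : ℂ) r (φ w)))
      (nhdsWithin 1 (Set.Iio 1)) (nhds 0)) :
    ∀ A > (0 : ℝ), ∃ K > (0 : ℝ), ∃ lam₀ : ℝ, 0 < lam₀ ∧ lam₀ < 1 ∧
      ∀ lam : ℝ, 0 < lam → lam < lam₀ →
        circleMeasure {w : ℂ | 1 - ‖φ w‖ < lam}
          ≤ ENNReal.ofReal (K / Ψ (A * Ψinv (1 / lam))) := by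
  intro A hA
  obtain ⟨α, hα, x₀, hx₀, hΔ⟩ := hΔ2
  set B := max A 1
  have hΨpos : ∀ x, 0 < x → 0 < Ψ x := fun x hx => hΨ0 ▸ hΨmono self_mem_Ici (mem_Ici.2 hx.le) hx
  have hαB : 0 < α * B := by positivity
  obtain ⟨lam₀, hlam₀, hlam₀1, hsmall⟩ := exists_forall_lt_of_eventually_nhdsGT_zero
    ((eventually_ofReal_mul_luxNorm_uar_lt hW (by positivity : 0 < 1 / (9 * (α * B)))).and
      (tendsto_inv_nhdsGT_zero.eventually_ge_atTop (Ψ x₀)))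
  refine ⟨8, by norm_num, lam₀, hlam₀, hlam₀1, fun lam hlam hlamlt => ?_⟩
  obtain ⟨hlux, hx₀lam⟩ := hsmall lam hlam hlamlt
  set t := Ψinv (1 / lam)
  have hΨt : Ψ t = 1 / lam := hΨinv2 _ (by positivity)
  have ht : x₀ ≤ t := (hΨmono.le_iff_le (mem_Ici.2 hx₀.le) (mem_Ici.2 (hΨinv0 _ (by positivity)))).1
    (by rwa [hΨt, one_div])
  have ht0 : 0 < t := hx₀.trans_le ht
  have hΔt := apply_mul_apply_le_of_sq_le hΨmono.monotoneOn hΨ0 hΔ hA.le ht0.le ht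
  calc circleMeasure {w : ℂ | 1 - ‖φ w‖ < lam}
      ≤ ENNReal.ofReal (8 / lam) / ENNReal.ofReal (Ψ (α * B * t)) :=
        circleMeasure_one_sub_norm_lt_le hΨmono.monotoneOn hφmeas hφbd hlam
          (hlamlt.trans hlam₀1) hαB ht0 hlux
    _ ≤ ENNReal.ofReal (8 / Ψ (A * t)) := by
        rw [← ENNReal.ofReal_div_of_pos (hΨpos _ (by positivity)), div_div]
        refine ENNReal.ofReal_le_ofReal
          (div_le_div_of_nonneg_left (by norm_num) (hΨpos _ (mul_pos hA ht0)) ?_)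
        calc Ψ (A * t) = lam * (Ψ t * Ψ (A * t)) := by rw [hΨt]; field_simp
          _ ≤ lam * Ψ (α * B * t) := by gcongr

theorem stmt_5
    (Ψ Ψinv : ℝ → ℝ)
    (hΨ0 : Ψ 0 = 0)
    (hΨmono : StrictMonoOn Ψ (Set.Ici 0))
    (hΨconv : StrictConvexOn ℝ (Set.Ici 0) Ψ)
    (hΨcont : ContinuousOn Ψ (Set.Ici 0))
    (hΨlim : Filter.Tendsto (fun x => Ψ x / x) Filter.atTop Filter.atTop)
    (hΨinv1 : ∀ x, 0 ≤ x → Ψinv (Ψ x) = x)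
    (hΨinv2 : ∀ y, 0 ≤ y → Ψ (Ψinv y) = y)
    (hΨinv0 : ∀ y, 0 ≤ y → 0 ≤ Ψinv y)
    -- condition Δ²
    (hΔ2 : ∃ α > (1 : ℝ), ∃ x₀ > (0 : ℝ), ∀ x ≥ x₀, (Ψ x) ^ 2 ≤ Ψ (α * x))
    (φ : ℂ → ℂ) (hφmeas : Measurable φ)
    (hφbd : ∀ w : ℂ, ‖w‖ = 1 → ‖φ w‖ ≤ 1)
    -- condition (W)
    (hW : Filter.Tendsto
      (fun r : ℝ => ENNReal.ofReal (Ψinv (1 / (1 - r))) *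
        ⨆ a : {a : ℂ // ‖a‖ = 1},
          luxNorm Ψ circleMeasure (fun w => uar (a : ℂ) r (φ w)))
      (nhdsWithin 1 (Set.Iio 1)) (nhds 0)) :
    ∀ A > (0 : ℝ), ∃ K > (0 : ℝ), ∃ lam₀ : ℝ, 0 < lam₀ ∧ lam₀ < 1 ∧
      ∀ lam : ℝ, 0 < lam → lam < lam₀ →
        circleMeasure {w : ℂ | 1 - ‖φ w‖ < lam}
          ≤ ENNReal.ofReal (K / Ψ (A * Ψinv (1 / lam))) :=
  stmt_5_general Ψ Ψinv hΨ0 hΨmono hΨinv2 hΨinv0 hΔ2 φ hφmeas hφbd hW
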